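/- The operator 𝒮 is invertible, with explicit inverse 𝒮′ = Σ_{i,j ∈ I} q^{−φ(i,j)} E_{ii} ⊗̂ E_{jj} − ξ Σ_{i,j ∈ I, i<j} (−1)^{p(i)} (E_{ji} + E_{−j,−i}) ⊗̂ E_{ij}; that is, 𝒮 ∘ 𝒮′ = 𝒮′ ∘ 𝒮 = id_{V ⊗ V}. -/

import Mathlib

/-!
Both operators split as `𝒮 = D + ξ T` and `𝒮′ = D⁻¹ - ξ T`, where `D` is the diagonal operator
`v_a ⊗ v_b ↦ q^{φ(a,b)} v_a ⊗ v_b` and `T` collects the off-diagonal terms. `T` is a sum of two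
weighted permutation matrices, for `(a,b) ↦ (b,a)` and `(a,b) ↦ (-b,-a)`, whose weights are
supported where `φ` changes sign along the permutation; hence `T D⁻¹ = D T`. The two paths of
length two from `(a,b)` to `(-a,-b)` carry opposite signs, so `T² = 0`. Then
`(D + ξ T)(D⁻¹ - ξ T) = 1 - ξ D T + ξ T D⁻¹ - ξ² T² = 1`, and symmetrically.
-/

open scoped BigOperators

set_option synthInstance.maxHeartbeats 400000
set_option maxHeartbeats 1000000

noncomputable section

/-- The base field `K = ℂ(q)`. -/
abbrev K : Type := RatFunc ℂ

/-- The indeterminate `q ∈ ℂ(q)`. -/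
noncomputable def q : K := RatFunc.X

/-- `ξ = q - q⁻¹`. -/
noncomputable def ξ : K := q - q⁻¹

/-- The index set `I_{N|N} = {-N, …, -1, 1, …, N} ⊆ ℤ`. -/
def IdxSet (N : ℕ) : Finset ℤ := (Finset.Icc (-(N : ℤ)) N).filter (fun i => i ≠ 0)

/-- Elements of the index set `I_{N|N}`. -/
abbrev Idx (N : ℕ) := {i : ℤ // i ∈ IdxSet N}

/-- Negation on the index set. -/
def Idx.neg {N : ℕ} (i : Idx N) : Idx N :=
  ⟨-i.1, by
    have h := i.2
    simp only [IdxSet, Finset.mem_filter, Finset.mem_Icc] at h ⊢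
    omega⟩

/-- Parity: `p(i) = 0` if `i > 0`, and `p(i) = 1` if `i < 0`. -/
def pty {N : ℕ} (i : Idx N) : ℕ := if 0 < i.1 then 0 else 1

/-- `φ(i,j) = (-1)^{p(j)} (δ_{i,j} + δ_{i,-j})`. -/
def phi {N : ℕ} (i j : Idx N) : ℤ :=
  (if 0 < j.1 then 1 else -1) * ((if i = j then 1 else 0) + (if i.1 = -j.1 then 1 else 0))

/-- The matrix unit `E_{ij}`, i.e. the operator `E_{ij} v_k = δ_{jk} v_i`. -/
def E {N : ℕ} (i j : Idx N) : Matrix (Idx N) (Idx N) K := Matrix.single i j 1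

/-- The super tensor product `A ⊗̂ B` of two operators on `V`, where `B` is
homogeneous of parity `pB`: on basis vectors
`(A ⊗̂ B)(v_a ⊗ v_b) = (-1)^{pB ⬝ p(a)} (A v_a) ⊗ (B v_b)`. -/
def superT {N : ℕ} (A B : Matrix (Idx N) (Idx N) K) (pB : ℕ) :
    Matrix (Idx N × Idx N) (Idx N × Idx N) K :=
  Matrix.of fun rc cc => ((-1 : K) ^ (pB * pty cc.1)) * A rc.1 cc.1 * B rc.2 cc.2

/-- The operator `𝒮` on `V ⊗ V`:
`𝒮 = Σ_{i,j} q^{φ(i,j)} E_{ii} ⊗̂ E_{jj}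
  + ξ Σ_{i<j} (-1)^{p(i)} (E_{ji} + E_{-j,-i}) ⊗̂ E_{ij}`. -/
def S (N : ℕ) : Matrix (Idx N × Idx N) (Idx N × Idx N) K :=
  (∑ i : Idx N, ∑ j : Idx N, (q ^ phi i j) • superT (E i i) (E j j) 0)
  + ξ • ∑ i : Idx N, ∑ j : Idx N,
      (if i.1 < j.1 then
        ((-1 : K) ^ pty i) • superT (E j i + E j.neg i.neg) (E i j) (pty i + pty j)
      else 0)

/-- The operator `𝒮′` on `V ⊗ V`:
`𝒮′ = Σ_{i,j} q^{-φ(i,j)} E_{ii} ⊗̂ E_{jj}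
  - ξ Σ_{i<j} (-1)^{p(i)} (E_{ji} + E_{-j,-i}) ⊗̂ E_{ij}`. -/
def S' (N : ℕ) : Matrix (Idx N × Idx N) (Idx N × Idx N) K :=
  (∑ i : Idx N, ∑ j : Idx N, (q ^ (-phi i j)) • superT (E i i) (E j j) 0)
  - ξ • ∑ i : Idx N, ∑ j : Idx N,
      (if i.1 < j.1 then
        ((-1 : K) ^ pty i) • superT (E j i + E j.neg i.neg) (E i j) (pty i + pty j)
      else 0)

theorem add_smul_mul_sub_smul_eq_one {R A : Type*} [CommRing R] [Ring A] [Algebra R A]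
    {d d' t : A} (c : R) (hd : d * d' = 1) (hd' : d' * d = 1) (hcomm : t * d' = d * t)
    (ht : t * t = 0) :
    (d + c • t) * (d' - c • t) = 1 ∧ (d' - c • t) * (d + c • t) = 1 := by
  have hcomm' : d' * t = t * d :=
    calc d' * t = d' * (t * d') * d := by rw [mul_assoc, mul_assoc, hd', mul_one]
      _ = t * d := by rw [hcomm, ← mul_assoc, hd', one_mul]
  constructor <;>
  · simp only [mul_sub, add_mul, sub_mul, mul_add, smul_mul_assoc, mul_smul_comm, hd, hd', hcomm,
      hcomm', ht, smul_zero, add_zero, sub_zero]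
    abel

section MonomialMatrix

variable {n α : Type*} [DecidableEq n]

def monomialMatrix [Zero α] (f : n → n) (c : n → α) : Matrix n n α :=
  Matrix.of fun x z => if z = f x then c x else 0

theorem monomialMatrix_add [AddZeroClass α] (f : n → n) (c c' : n → α) :
    monomialMatrix f c + monomialMatrix f c' = monomialMatrix f (c + c') := by
  ext x z
  simp only [monomialMatrix, Matrix.add_apply, Matrix.of_apply, Pi.add_apply]
  split_ifs <;> simp

theorem monomialMatrix_eq_zero [Zero α] (f : n → n) {c : n → α} (hc : ∀ x, c x = 0) :
    monomialMatrix f c = 0 := by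
  ext x z
  simp [monomialMatrix, hc]

variable [Fintype n]

theorem monomialMatrix_eq_sum_single [AddCommMonoid α] (f : n → n) (c : n → α) :
    monomialMatrix f c = ∑ x, Matrix.single x (f x) (c x) := by
  ext y z
  simp [monomialMatrix, Matrix.sum_apply, Matrix.single_apply, ite_and, eq_comm]

theorem monomialMatrix_mul_monomialMatrix [NonUnitalNonAssocSemiring α] (f g : n → n)
    (c d : n → α) :
    monomialMatrix f c * monomialMatrix g d = monomialMatrix (g ∘ f) fun x => c x * d (f x) := by
  ext x z
  simp only [monomialMatrix, Matrix.mul_apply, Matrix.of_apply, Function.comp_apply, ite_mul,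
    mul_ite, zero_mul, mul_zero]
  rw [Finset.sum_eq_single (f x)] <;> simp +contextual

theorem monomialMatrix_mul_diagonal_eq_diagonal_mul [CommSemiring α] (f : n → n) {c : n → α}
    {d d' : n → α} (h : ∀ x, c x ≠ 0 → d' (f x) = d x) :
    monomialMatrix f c * Matrix.diagonal d' = Matrix.diagonal d * monomialMatrix f c := by
  ext x z
  simp only [Matrix.mul_diagonal, Matrix.diagonal_mul, monomialMatrix, Matrix.of_apply]
  split_ifs with hz
  · subst hz
    by_cases hc : c x = 0
    · simp [hc]
    · rw [h x hc, mul_comm]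
  · simp

end MonomialMatrix

section Indices

variable {N : ℕ}

theorem Idx.val_ne_zero (i : Idx N) : i.1 ≠ 0 :=
  (Finset.mem_filter.mp i.2).2

@[simp] theorem Idx.val_neg (i : Idx N) : i.neg.1 = -i.1 := rfl

@[simp] theorem Idx.neg_neg (i : Idx N) : i.neg.neg = i :=
  Subtype.ext (_root_.neg_neg i.1)

theorem Idx.neg_involutive : Function.Involutive (Idx.neg (N := N)) := Idx.neg_neg

theorem pty_of_pos {i : Idx N} (h : 0 < i.1) : pty i = 0 := if_pos h

theorem pty_of_neg {i : Idx N} (h : i.1 < 0) : pty i = 1 := if_neg h.not_gt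

theorem phi_swap {a b : Idx N} (h : a ≠ b) : phi b a = -phi a b := by
  have ha := a.val_ne_zero
  have hb := b.val_ne_zero
  rw [Ne, ← Subtype.coe_inj] at h
  simp only [phi, ← Subtype.coe_inj]
  split_ifs <;> omega

theorem phi_neg_swap {a b : Idx N} (h : a.1 ≠ -b.1) : phi b.neg a.neg = -phi a b := by
  have ha := a.val_ne_zero
  have hb := b.val_ne_zero
  simp only [phi, ← Subtype.coe_inj, Idx.val_neg]
  grind

end Indices

section Operators

variable {N : ℕ}

def negSwap (x : Idx N × Idx N) : Idx N × Idx N := (x.2.neg, x.1.neg)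

def swapCoeff (x : Idx N × Idx N) : K :=
  if x.2.1 < x.1.1 then (-1) ^ pty x.2 * (-1) ^ ((pty x.2 + pty x.1) * pty x.2) else 0

def negSwapCoeff (x : Idx N × Idx N) : K :=
  if x.2.1 < -x.1.1 then (-1) ^ pty x.2 * (-1) ^ ((pty x.2 + pty x.1.neg) * pty x.2.neg) else 0

variable (N) in
def offDiagPart : Matrix (Idx N × Idx N) (Idx N × Idx N) K :=
  monomialMatrix Prod.swap swapCoeff + monomialMatrix negSwap negSwapCoeff

theorem superT_E_E (a b c d : Idx N) (p : ℕ) :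
    superT (E a b) (E c d) p = Matrix.single (a, c) (b, d) ((-1) ^ (p * pty b)) := by
  ext ⟨r, r'⟩ ⟨s, s'⟩
  simp only [superT, E, Matrix.of_apply, Matrix.single_apply, Prod.mk.injEq]
  split_ifs <;> simp_all

theorem superT_add_left (A A' B : Matrix (Idx N) (Idx N) K) (p : ℕ) :
    superT (A + A') B p = superT A B p + superT A' B p := by
  ext x z
  simp only [superT, Matrix.of_apply, Matrix.add_apply]
  ring

theorem sum_smul_superT_E_self_eq_diagonal (c : Idx N → Idx N → K) :
    ∑ i, ∑ j, c i j • superT (E i i) (E j j) 0 = Matrix.diagonal fun x => c x.1 x.2 := by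
  simp only [superT_E_E, zero_mul, pow_zero, Matrix.smul_single, smul_eq_mul, mul_one]
  rw [← Matrix.sum_single_eq_diagonal, ← Fintype.sum_prod_type']

theorem sum_ite_smul_superT_eq_offDiagPart :
    ∑ i : Idx N, ∑ j : Idx N,
      (if i.1 < j.1 then
        ((-1 : K) ^ pty i) • superT (E j i + E j.neg i.neg) (E i j) (pty i + pty j)
      else 0) = offDiagPart N := by
  have hterm : ∀ i j : Idx N,
      (if i.1 < j.1 then
        ((-1 : K) ^ pty i) • superT (E j i + E j.neg i.neg) (E i j) (pty i + pty j)
      else 0) = Matrix.single (j, i) (i, j) (swapCoeff (j, i))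
        + Matrix.single (j.neg, i) (i.neg, j) (negSwapCoeff (j.neg, i)) := by
    intro i j
    simp only [swapCoeff, negSwapCoeff, Idx.val_neg, neg_neg, Idx.neg_neg]
    split_ifs <;> simp [superT_add_left, superT_E_E]
  simp only [hterm, Finset.sum_add_distrib]
  rw [offDiagPart, monomialMatrix_eq_sum_single, monomialMatrix_eq_sum_single]
  congr 1
  · rw [Finset.sum_comm, ← Fintype.sum_prod_type']
    rfl
  · rw [Finset.sum_comm, ← Equiv.sum_comp (Idx.neg_involutive.toPerm _),
      ← Fintype.sum_prod_type']
    simp [negSwap]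

theorem S_eq_diagonal_add_smul_offDiagPart :
    S N = Matrix.diagonal (fun x => q ^ phi x.1 x.2) + ξ • offDiagPart N := by
  rw [S, sum_smul_superT_E_self_eq_diagonal (fun i j => q ^ phi i j),
    sum_ite_smul_superT_eq_offDiagPart]

theorem S'_eq_diagonal_sub_smul_offDiagPart :
    S' N = Matrix.diagonal (fun x => q ^ (-phi x.1 x.2)) - ξ • offDiagPart N := by
  rw [S', sum_smul_superT_E_self_eq_diagonal (fun i j => q ^ (-phi i j)),
    sum_ite_smul_superT_eq_offDiagPart]

theorem offDiagPart_mul_diagonal :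
    offDiagPart N * Matrix.diagonal (fun x => q ^ (-phi x.1 x.2))
      = Matrix.diagonal (fun x => q ^ phi x.1 x.2) * offDiagPart N := by
  rw [offDiagPart, add_mul, mul_add]
  congr 1 <;> apply monomialMatrix_mul_diagonal_eq_diagonal_mul <;> intro x hx
  · have hlt := (ite_ne_right_iff.mp hx).1
    rw [Prod.fst_swap, Prod.snd_swap, phi_swap (fun h => by simp [h] at hlt), neg_neg]
  · have hlt := (ite_ne_right_iff.mp hx).1
    rw [negSwap, phi_neg_swap (by omega), neg_neg]

theorem swapCoeff_mul_swapCoeff_swap (x : Idx N × Idx N) : swapCoeff x * swapCoeff x.swap = 0 := by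
  simp only [swapCoeff, Prod.fst_swap, Prod.snd_swap]
  split_ifs <;> first | omega | simp

theorem negSwapCoeff_mul_negSwapCoeff_negSwap (x : Idx N × Idx N) :
    negSwapCoeff x * negSwapCoeff (negSwap x) = 0 := by
  simp only [negSwapCoeff, negSwap, Idx.val_neg, Idx.neg_neg]
  split_ifs <;> first | omega | simp

theorem swapCoeff_mul_add_negSwapCoeff_mul (x : Idx N × Idx N) :
    swapCoeff x * negSwapCoeff x.swap + negSwapCoeff x * swapCoeff (negSwap x) = 0 := by
  obtain ⟨a, b⟩ := x
  -- both paths of length two from `(a, b)` exist exactly when `b < a` and `b < -a`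
  by_cases h : b.1 < a.1 ∧ b.1 < -a.1
  · have hb : pty b = 1 := pty_of_neg (by omega)
    have hb' : pty b.neg = 0 := pty_of_pos (by simp; omega)
    simp only [swapCoeff, negSwapCoeff, negSwap, Prod.swap, Idx.val_neg, h.1, h.2,
      show a.1 < -b.1 by omega, show -a.1 < -b.1 by omega, if_true, hb, hb']
    rcases a.val_ne_zero.lt_or_gt with ha | ha
    · rw [pty_of_neg ha, pty_of_pos (by simp; omega)]
      norm_num
    · rw [pty_of_pos ha, pty_of_neg (by simp; omega)]
      norm_num
  · rcases not_and_or.mp h with h | h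
    · have h' : ¬ -a.1 < -b.1 := by omega
      simp [swapCoeff, negSwap, h, h']
    · have h' : ¬ a.1 < -b.1 := by omega
      simp [negSwapCoeff, h, h']

theorem offDiagPart_mul_self : offDiagPart N * offDiagPart N = 0 := by
  have hcomm : (negSwap ∘ Prod.swap : Idx N × Idx N → _) = Prod.swap ∘ negSwap := rfl
  rw [offDiagPart, add_mul, mul_add, mul_add, monomialMatrix_mul_monomialMatrix,
    monomialMatrix_mul_monomialMatrix, monomialMatrix_mul_monomialMatrix,
    monomialMatrix_mul_monomialMatrix, monomialMatrix_eq_zero _ swapCoeff_mul_swapCoeff_swap,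
    monomialMatrix_eq_zero _ negSwapCoeff_mul_negSwapCoeff_negSwap, hcomm, zero_add, add_zero,
    monomialMatrix_add]
  exact monomialMatrix_eq_zero _ swapCoeff_mul_add_negSwapCoeff_mul

end Operators

theorem S_mul_S'_eq_one_general (N : ℕ) :
    S N * S' N = 1 ∧ S' N * S N = 1 := by
  have hq : q ≠ 0 := RatFunc.X_ne_zero
  rw [S_eq_diagonal_add_smul_offDiagPart, S'_eq_diagonal_sub_smul_offDiagPart]
  refine add_smul_mul_sub_smul_eq_one ξ ?_ ?_ offDiagPart_mul_diagonal offDiagPart_mul_self <;>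
  · rw [Matrix.diagonal_mul_diagonal, ← Matrix.diagonal_one]
    congr 1
    funext x
    rw [← zpow_add₀ hq]
    simp

/-- The operator `𝒮` is invertible, with explicit inverse `𝒮′`:
`𝒮 ∘ 𝒮′ = 𝒮′ ∘ 𝒮 = id_{V ⊗ V}`. -/
theorem S_mul_S'_eq_one (N : ℕ) (hN : 0 < N) :
    S N * S' N = 1 ∧ S' N * S N = 1 :=
  S_mul_S'_eq_one_general N
end
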